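/- Let C_1, ..., C_k be a sequence of length-constrained cuts in graph G with edge lengths, with witness demands D_1, ..., D_k such that each D_i is an A-respecting h-length demand that is hs-separated by C_i in the graph G − (Σ_{j<i} C_j)_{hs}. Then the demand matching graph G(D_1,...,D_k) is an s-parallel-greedy graph on |A| vertices. -/

import Mathlib

/-!
Order the matchings backwards, `E k, …, E 1`. An edge of `E i` joins copies of a pair `(u, v)`
with `D i u v > 0`, so `u, v` are `hs`-far in `G` with lengths `ℓ + hs·(Σ_{j<i} C j + C i)`.
Each later matching `E j` (`j > i`) only joins copies of pairs that are `h`-close in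
`G − (Σ_{t<j} C t)_{hs}`, whose lengths dominate those above. Projecting a walk of length `n`
in the union of the later matchings to `G` gives a walk of length at most `n·h`, so `n·h > hs`,
i.e. `n > s`.
-/

open SimpleGraph Finset

variable {V : Type*}

/-- The length of a walk with respect to the edge length function `ℓ`. -/
def walkLen {G : SimpleGraph V} (ℓ : Sym2 V → ℝ) {u v : V} (p : G.Walk u v) : ℝ :=
  (p.edges.map ℓ).sum

/-- A demand `D` is `A`-respecting if every vertex sends and receives at most `A v`. -/
def Respecting [Fintype V] (A : V → ℕ) (D : V → V → ℕ) : Prop :=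
  ∀ v, (∑ w, D v w) ≤ A v ∧ (∑ w, D w v) ≤ A v

/-- A demand `D` is `h`-length (w.r.t. edge lengths `ℓ`) if positive demand pairs are at
distance at most `h`, i.e. joined by a walk of length at most `h`. -/
def HLength (G : SimpleGraph V) (ℓ : Sym2 V → ℝ) (h : ℝ) (D : V → V → ℕ) : Prop :=
  ∀ u v, 0 < D u v → ∃ p : G.Walk u v, walkLen ℓ p ≤ h

/-- `u` and `v` are at distance strictly greater than `h` w.r.t. edge lengths `ℓ`. -/
def FarApart (G : SimpleGraph V) (ℓ : Sym2 V → ℝ) (h : ℝ) (u v : V) : Prop :=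
  ∀ p : G.Walk u v, h < walkLen ℓ p

/-- The demand `D` is `hs`-separated by the cut `C` (applied at scale `hs` to the edge
lengths `ℓ`): every positive demand pair is at distance `> hs` in `G − C_{hs}`. -/
def SeparatedDemand (G : SimpleGraph V) (ℓ : Sym2 V → ℝ) (hs : ℝ) (C : Sym2 V → ℝ)
    (D : V → V → ℕ) : Prop :=
  ∀ u v, 0 < D u v → FarApart G (fun e => ℓ e + hs * C e) hs u v

/-- The size `|C| = Σ_e U_e·C(e)` of a length-constrained cut `C`, with capacities `cap`. -/
noncomputable def cutSize [Fintype V] [DecidableEq V] (G : SimpleGraph V)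
    [DecidableRel G.Adj] (cap : Sym2 V → ℕ) (C : Sym2 V → ℝ) : ℝ :=
  ∑ e ∈ G.edgeFinset, (cap e : ℝ) * C e

/-- The `(h,s)`-length demand-size of the cut `C` w.r.t. the node-weighting `A`, in the
graph `G` with edge lengths `ℓ`: the maximum size of an `A`-respecting `h`-length demand
which is `hs`-separated by `C`. -/
noncomputable def demandSize [Fintype V] (G : SimpleGraph V) (ℓ : Sym2 V → ℝ)
    (A : V → ℕ) (C : Sym2 V → ℝ) (h hs : ℝ) : ℕ :=
  sSup {n | ∃ D : V → V → ℕ, Respecting A D ∧ HLength G ℓ h D ∧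
    SeparatedDemand G ℓ hs C D ∧ n = ∑ u, ∑ v, D u v}

/-- `M` witnesses that `G` is `s`-parallel-greedy. -/
def IsParallelGreedy {W : Type*} (G : SimpleGraph W) (s k : ℕ)
    (M : Fin k → SimpleGraph W) : Prop :=
  (∀ i, M i ≤ G) ∧
  (∀ e ∈ G.edgeSet, ∃ i, e ∈ (M i).edgeSet) ∧
  (Pairwise fun i j => Disjoint (M i).edgeSet (M j).edgeSet) ∧
  (∀ i, ∀ v u w : W, (M i).Adj v u → (M i).Adj v w → u = w) ∧
  (∀ i : Fin k, ∀ u v : W, (M i).Adj u v →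
    ∀ p : (⨆ j : {j : Fin k // j < i}, M j.1).Walk u v, s < p.length)

section WalkLength

variable {G : SimpleGraph V}

lemma walkLen_append (ℓ : Sym2 V → ℝ) {u v w : V} (p : G.Walk u v) (q : G.Walk v w) :
    walkLen ℓ (p.append q) = walkLen ℓ p + walkLen ℓ q := by
  simp [walkLen, Walk.edges_append]

lemma walkLen_mono {ℓ₁ ℓ₂ : Sym2 V → ℝ} (hle : ∀ e, ℓ₁ e ≤ ℓ₂ e) {u v : V} (p : G.Walk u v) :
    walkLen ℓ₁ p ≤ walkLen ℓ₂ p :=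
  List.sum_le_sum (by simpa using fun e _ => hle e)

lemma exists_walk_walkLen_le_length_mul {W : Type*} {Γ : SimpleGraph W} {f : W → V}
    {ℓ : Sym2 V → ℝ} {h : ℝ} (hΓ : ∀ x y, Γ.Adj x y → ∃ q : G.Walk (f x) (f y), walkLen ℓ q ≤ h)
    {x y : W} (p : Γ.Walk x y) : ∃ q : G.Walk (f x) (f y), walkLen ℓ q ≤ p.length * h := by
  induction p with
  | nil => exact ⟨.nil, by simp [walkLen]⟩
  | cons hadj _ ih =>
    obtain ⟨q₁, hq₁⟩ := hΓ _ _ hadj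
    obtain ⟨q₂, hq₂⟩ := ih
    refine ⟨q₁.append q₂, ?_⟩
    rw [walkLen_append, Walk.length_cons, Nat.cast_succ]
    linarith

lemma lt_length_of_farApart {W : Type*} {Γ : SimpleGraph W} {f : W → V}
    {ℓ : Sym2 V → ℝ} {h : ℝ} (hh : 0 ≤ h) {s : ℕ}
    (hΓ : ∀ x y, Γ.Adj x y → ∃ q : G.Walk (f x) (f y), walkLen ℓ q ≤ h)
    {x y : W} (hfar : FarApart G ℓ (h * s) (f x) (f y)) (p : Γ.Walk x y) : s < p.length := by
  by_contra! hps
  obtain ⟨q, hq⟩ := exists_walk_walkLen_le_length_mul hΓ p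
  have : (p.length : ℝ) * h ≤ h * s := by
    rw [mul_comm]; exact mul_le_mul_of_nonneg_left (by exact_mod_cast hps) hh
  exact (hfar q).not_ge (hq.trans this)

end WalkLength

section CumulativeCut

variable {ι : Type*} [Fintype ι] [Preorder ι] [DecidableLT ι]

/-- The edge lengths of `G − (Σ_{j<i} C j)_c`. -/
def cumulativeLength (ℓ : Sym2 V → ℝ) (c : ℝ) (C : ι → Sym2 V → ℝ) (i : ι) (e : Sym2 V) : ℝ :=
  ℓ e + c * ∑ j ∈ univ.filter (· < i), C j e

lemma cumulativeLength_add_le [DecidableEq ι] {ℓ : Sym2 V → ℝ} {c : ℝ} (hc : 0 ≤ c)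
    {C : ι → Sym2 V → ℝ} (hC : ∀ i e, 0 ≤ C i e) {i j : ι} (hij : i < j) (e : Sym2 V) :
    cumulativeLength ℓ c C i e + c * C i e ≤ cumulativeLength ℓ c C j e := by
  have hsub : insert i (univ.filter (· < i)) ⊆ univ.filter (· < j) := by
    intro t ht
    simp only [mem_insert, mem_filter, mem_univ, true_and] at ht ⊢
    rcases ht with rfl | ht
    · exact hij
    · exact ht.trans hij
  have hsum : C i e + ∑ t ∈ univ.filter (· < i), C t e ≤ ∑ t ∈ univ.filter (· < j), C t e := by
    rw [← sum_insert (f := (C · e)) (by simp)]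
    exact sum_le_sum_of_subset_of_nonneg hsub fun t _ _ => hC t e
  unfold cumulativeLength
  nlinarith

end CumulativeCut

lemma ncard_edges_between_pos [Fintype V] {A : V → ℕ} {E : SimpleGraph ((v : V) × Fin (A v))}
    {x y : (v : V) × Fin (A v)} (hxy : E.Adj x y) :
    0 < {e ∈ E.edgeSet | ∃ (a : Fin (A x.1)) (b : Fin (A y.1)),
      e = Sym2.mk ⟨x.1, a⟩ ⟨y.1, b⟩}.ncard :=
  (Set.ncard_pos (Set.toFinite _)).2 ⟨s(x, y), E.mem_edgeSet.2 hxy, x.2, y.2, rfl⟩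

lemma isParallelGreedy_comp_rev {W : Type*} {k s : ℕ} {E : Fin k → SimpleGraph W}
    (hmatching : ∀ i, ∀ a b c, (E i).Adj a b → (E i).Adj a c → b = c)
    (hdisj : Pairwise fun i j => Disjoint (E i).edgeSet (E j).edgeSet)
    (hgreedy : ∀ i : Fin k, ∀ u v : W, (E i).Adj u v →
      ∀ p : (⨆ j : {j : Fin k // i < j}, E j.1).Walk u v, s < p.length) :
    IsParallelGreedy (⨆ i, E i) s k (E ∘ Fin.rev) := by
  refine ⟨fun i => le_iSup E i.rev, ?_,
    fun i j hij => hdisj fun hrev => hij (Fin.rev_injective hrev), fun i => hmatching i.rev,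
    fun i u v huv p => ?_⟩
  · intro e he
    rw [edgeSet_iSup, Set.mem_iUnion] at he
    obtain ⟨j, hj⟩ := he
    exact ⟨j.rev, by simpa using hj⟩
  · have hle : (⨆ j : {j : Fin k // j < i}, (E ∘ Fin.rev) j.1) ≤
        ⨆ j : {j : Fin k // i.rev < j}, E j.1 :=
      iSup_le fun j => le_iSup_of_le ⟨j.1.rev, Fin.rev_lt_rev.2 j.2⟩ le_rfl
    simpa using hgreedy i.rev u v huv (p.mapLe hle)

theorem demand_matching_graph_parallel_greedy_general
    [Fintype V] (G : SimpleGraph V)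
    (ℓ : Sym2 V → ℝ)
    (h : ℝ) (hh : 1 ≤ h) (s : ℕ)
    (A : V → ℕ)
    (k : ℕ) (C : Fin k → Sym2 V → ℝ) (hC : ∀ i e, 0 ≤ C i e)
    (D : Fin k → V → V → ℕ)
    (hlen : ∀ i, HLength G
      (fun e => ℓ e + h * s * ∑ j ∈ Finset.univ.filter (· < i), C j e) h (D i))
    (hsep : ∀ i, SeparatedDemand G
      (fun e => ℓ e + h * s * ∑ j ∈ Finset.univ.filter (· < i), C j e)
      (h * s) (C i) (D i))
    (H : SimpleGraph ((v : V) × Fin (A v)))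
    (E : Fin k → SimpleGraph ((v : V) × Fin (A v)))
    (hmatching : ∀ i, ∀ a b c, (E i).Adj a b → (E i).Adj a c → b = c)
    (hdisj : Pairwise fun i j => Disjoint (E i).edgeSet (E j).edgeSet)
    (hunion : H = ⨆ i, E i)
    (hcount : ∀ i (u v : V),
      {e ∈ (E i).edgeSet | ∃ (a : Fin (A u)) (b : Fin (A v)),
        e = Sym2.mk ⟨u, a⟩ ⟨v, b⟩}.ncard = D i u v) :
    Fintype.card ((v : V) × Fin (A v)) = ∑ v, A v ∧
      ∃ M : Fin k → SimpleGraph ((v : V) × Fin (A v)), IsParallelGreedy H s k M := by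
  have hh₀ : 0 ≤ h := zero_le_one.trans hh
  have hD : ∀ i x y, (E i).Adj x y → 0 < D i x.1 y.1 := fun i x y hxy =>
    hcount i x.1 y.1 ▸ ncard_edges_between_pos hxy
  refine ⟨by simp, E ∘ Fin.rev, hunion ▸ isParallelGreedy_comp_rev hmatching hdisj ?_⟩
  intro i u v huv p
  refine lt_length_of_farApart hh₀ (f := Sigma.fst) ?_ (hsep i _ _ (hD i u v huv)) p
  intro x y hxy
  obtain ⟨⟨j, hij⟩, hxy⟩ := iSup_adj.1 hxy
  obtain ⟨q, hq⟩ := hlen j _ _ (hD j x y hxy)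
  exact ⟨q, (walkLen_mono (cumulativeLength_add_le (by positivity) hC hij) q).trans hq⟩

/-- Let `C_1, …, C_k` be length-constrained cuts with witness demands `D_1, …, D_k`, where
each `D_i` is an `A`-respecting `h`-length demand which is `hs`-separated by `C_i` in the
graph `G − (Σ_{j<i} C_j)_{hs}`. Then the demand matching graph `H` of `(D_1,…,D_k)`
(which has `A v` copies of each vertex `v`, and for each `i` a matching `E i` with
`D_i(u,v)` edges between the copies of `u` and the copies of `v`) is an
`s`-parallel-greedy graph on `|A| = Σ_v A v` vertices. -/
theorem demand_matching_graph_parallel_greedy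
    [Fintype V] [DecidableEq V] (G : SimpleGraph V) [DecidableRel G.Adj]
    (ℓ : Sym2 V → ℝ) (hℓ : ∀ e, 0 ≤ ℓ e)
    (h : ℝ) (hh : 1 ≤ h) (s : ℕ) (hs : 2 ≤ s)
    (A : V → ℕ) (hA : ∀ v, A v ≤ G.degree v)
    (k : ℕ) (C : Fin k → Sym2 V → ℝ) (hC : ∀ i e, 0 ≤ C i e)
    (D : Fin k → V → V → ℕ)
    (hresp : ∀ i, Respecting A (D i))
    (hlen : ∀ i, HLength G
      (fun e => ℓ e + h * s * ∑ j ∈ Finset.univ.filter (· < i), C j e) h (D i))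
    (hsep : ∀ i, SeparatedDemand G
      (fun e => ℓ e + h * s * ∑ j ∈ Finset.univ.filter (· < i), C j e)
      (h * s) (C i) (D i))
    (H : SimpleGraph ((v : V) × Fin (A v)))
    (E : Fin k → SimpleGraph ((v : V) × Fin (A v)))
    (hmatching : ∀ i, ∀ a b c, (E i).Adj a b → (E i).Adj a c → b = c)
    (hdisj : Pairwise fun i j => Disjoint (E i).edgeSet (E j).edgeSet)
    (hunion : H = ⨆ i, E i)
    (hcount : ∀ i (u v : V),
      {e ∈ (E i).edgeSet | ∃ (a : Fin (A u)) (b : Fin (A v)),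
        e = Sym2.mk ⟨u, a⟩ ⟨v, b⟩}.ncard = D i u v) :
    Fintype.card ((v : V) × Fin (A v)) = ∑ v, A v ∧
      ∃ M : Fin k → SimpleGraph ((v : V) × Fin (A v)), IsParallelGreedy H s k M :=
  demand_matching_graph_parallel_greedy_general G ℓ h hh s A k C hC D hlen hsep H E hmatching hdisj
    hunion hcount
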